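/- arXiv:2108.03505 — 2 statements merged into one kernel-verified Lean document; each statement's English description precedes it below -/
import Mathlib

section
/- The map 𝔭 defined by sending a sequence s = (s_α)_α to the family of polynomials 𝔭_{s,α}(t) solving the recursion ∂ₜ𝔭_{s,α}(t) = Σ_j α_j(α_j−1)𝔭_{s,α−2e_j}(t) with initial value s_α satisfies: (i) 𝔭_s(0) = s; (ii) 𝔭_{𝔭_s(t₁)}(t₂) = 𝔭_s(t₁+t₂) for all t₁,t₂ ∈ ℝ; (iii) 𝔭_{a·s + b·s'} = a·𝔭_s + b·𝔭_{s'} for all a,b ∈ ℝ and sequences s, s'. -/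
/-!
Write `Δ` for the Laplacian `(Δs)_α = Σ_j α_j(α_j-1) s_{α-2e_j}` on sequences. An induction on `k`
gives `(Δ^k s)_α = k! Σ_{|β|=k} c(α,β) s_{α-2β}` with `c(α,β)` the coefficients of `𝔭`, so
`𝔭_s(t) = Σ_k t^k/k! Δ^k s = e^{tΔ} s`, the series terminating at each `α` because `Δ^k s`
vanishes at `α` once `k > Σ_i ⌊α_i/2⌋`. The recursion is then termwise differentiation of the
exponential, `Δ` commutes with `𝔭` because it only lowers indices, and the semigroup law is the
binomial theorem.
-/

open Finset

/-- The heat moment polynomials: the unique solution of the recursion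
`∂ₜ 𝔭_{s,α}(t) = Σ_j α_j(α_j−1) 𝔭_{s,α−2e_j}(t)` with initial value `s_α`,
given by the explicit formula `e^{tΔ}` acting on the sequence. -/
noncomputable def fp {n : ℕ} (s : (Fin n → ℕ) → ℝ) (t : ℝ) (α : Fin n → ℕ) : ℝ :=
  ∑ β : (∀ i : Fin n, Fin (α i / 2 + 1)),
    (∏ i, ((α i).factorial : ℝ) /
        (((α i - 2 * (β i : ℕ)).factorial : ℝ) * (((β i : ℕ)).factorial : ℝ))) *
      s (fun i => α i - 2 * (β i : ℕ)) * t ^ (∑ i, (β i : ℕ))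

open scoped Nat

lemma add_pow_div_factorial {K : Type*} [Field K] [CharZero K] (x y : K) (N : ℕ) :
    (x + y) ^ N / N ! = ∑ p ∈ antidiagonal N, x ^ p.1 / p.1 ! * (y ^ p.2 / p.2 !) := by
  rw [(Commute.all x y).add_pow', sum_div]
  refine sum_congr rfl fun p hp => ?_
  rw [← mem_antidiagonal.mp hp, nsmul_eq_mul, Nat.cast_add_choose]
  have := Nat.cast_ne_zero (R := K) |>.mpr (p.1 + p.2).factorial_ne_zero
  field_simp

lemma sum_range_product_eq_sum_antidiagonal {M : Type*} [AddCommMonoid M] {m : ℕ}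
    (f : ℕ × ℕ → M) (hf : ∀ p : ℕ × ℕ, m ≤ p.1 + p.2 → f p = 0) :
    ∑ p ∈ range m ×ˢ range m, f p = ∑ N ∈ range m, ∑ p ∈ antidiagonal N, f p := by
  rw [← sum_filter_of_ne (p := fun p => p.1 + p.2 < m) fun p _ h => by
      by_contra hp
      exact h (hf p (not_lt.mp hp)),
    ← sum_fiberwise_of_maps_to (s := {p ∈ range m ×ˢ range m | p.1 + p.2 < m})
      (g := fun p => p.1 + p.2) (t := range m) fun p hp => mem_range.mpr (mem_filter.mp hp).2]
  refine sum_congr rfl fun N hN => sum_congr ?_ fun _ _ => rfl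
  ext p
  simp only [mem_filter, mem_product, mem_range, HasAntidiagonal.mem_antidiagonal] at hN ⊢
  omega

lemma hasDerivAt_sum_range_pow_div_factorial (c : ℕ → ℝ) (M : ℕ) (t : ℝ) :
    HasDerivAt (fun τ => ∑ k ∈ range (M + 1), τ ^ k / k ! * c k)
      (∑ k ∈ range M, t ^ k / k ! * c (k + 1)) t := by
  refine (HasDerivAt.fun_sum fun k (_ : k ∈ range (M + 1)) =>
    ((hasDerivAt_pow k t).div_const (k ! : ℝ)).mul_const (c k)).congr_deriv ?_
  rw [sum_range_succ', Nat.cast_zero, zero_mul, zero_div, zero_mul, add_zero]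
  refine sum_congr rfl fun k _ => ?_
  rw [Nat.factorial_succ]
  push_cast
  field_simp

namespace HeatMoment

variable {n : ℕ}

def halfBox (α : Fin n → ℕ) : Finset (Fin n → ℕ) :=
  Fintype.piFinset fun i => range (α i / 2 + 1)

lemma mem_halfBox {α β : Fin n → ℕ} : β ∈ halfBox α ↔ ∀ i, β i ≤ α i / 2 := by
  simp [halfBox]

noncomputable def heatCoeff (a b : ℕ) : ℝ := a ! / ((a - 2 * b)! * b !)

lemma sum_le_of_mem_halfBox {α β : Fin n → ℕ} (hβ : β ∈ halfBox α) :
    ∑ i, β i ≤ ∑ i, α i / 2 :=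
  sum_le_sum fun i _ => mem_halfBox.mp hβ i

/-- When `α j ≤ 1` the index `α - 2e_j` is truncated, but its coefficient `α_j(α_j-1)` is `0`. -/
noncomputable def laplacian (s : (Fin n → ℕ) → ℝ) (α : Fin n → ℕ) : ℝ :=
  ∑ j, (α j : ℝ) * ((α j : ℝ) - 1) * s (fun i => α i - if i = j then 2 else 0)

lemma fp_eq_sum_halfBox (s : (Fin n → ℕ) → ℝ) (t : ℝ) (α : Fin n → ℕ) :
    fp s t α = ∑ β ∈ halfBox α,
      (∏ i, heatCoeff (α i) (β i)) * s (fun i => α i - 2 * β i) * t ^ ∑ i, β i := by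
  refine sum_bij' (fun β _ i => β i) (fun β hβ i => ⟨β i, ?_⟩) (fun β _ => ?_) (by simp)
    (fun _ _ => rfl) (fun _ _ => rfl) (fun _ _ => rfl)
  · exact Nat.lt_succ_of_le (mem_halfBox.mp hβ i)
  · exact mem_halfBox.mpr fun i => Nat.le_of_lt_succ (β i).isLt

lemma mul_heatCoeff_sub_two {a b : ℕ} (ha : 2 ≤ a) (hb : b ≤ (a - 2) / 2) :
    (a : ℝ) * ((a : ℝ) - 1) * heatCoeff (a - 2) b = ((b : ℝ) + 1) * heatCoeff a (b + 1) := by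
  obtain ⟨c, rfl⟩ : ∃ c, a = c + 2 := ⟨a - 2, by omega⟩
  rw [heatCoeff, heatCoeff, Nat.add_sub_cancel, show c + 2 - 2 * (b + 1) = c - 2 * b by omega,
    Nat.factorial_succ (c + 1), Nat.factorial_succ c, Nat.factorial_succ b]
  push_cast
  field_simp
  ring

lemma mul_prod_heatCoeff_sub_two {α β : Fin n → ℕ} {j : Fin n} (hα : 2 ≤ α j)
    (hβ : β j ≤ (α j - 2) / 2) :
    (α j : ℝ) * ((α j : ℝ) - 1) * ∏ i, heatCoeff (α i - if i = j then 2 else 0) (β i)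
      = ((β j : ℝ) + 1) * ∏ i, heatCoeff (α i) (β i + if i = j then 1 else 0) := by
  have hrest : ∀ i ∈ ({j}ᶜ : Finset (Fin n)), heatCoeff (α i - if i = j then 2 else 0) (β i)
      = heatCoeff (α i) (β i + if i = j then 1 else 0) := fun i hi => by
    simp [(by simpa using hi : i ≠ j)]
  rw [Fintype.prod_eq_mul_prod_compl j, Fintype.prod_eq_mul_prod_compl j, prod_congr rfl hrest,
    ← mul_assoc, ← mul_assoc]
  simpa using congrArg (· * ∏ i ∈ {j}ᶜ, heatCoeff (α i) (β i + if i = j then 1 else 0))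
    (mul_heatCoeff_sub_two hα hβ)

lemma sum_halfBox_sub_two (k : ℕ) {α : Fin n → ℕ} {j : Fin n} (hα : 2 ≤ α j)
    (f : (Fin n → ℕ) → ℝ) :
    ∑ β ∈ halfBox (fun i => α i - if i = j then 2 else 0) with ∑ i, β i = k,
        f (fun i => β i + if i = j then 1 else 0)
      = ∑ β ∈ halfBox α with ∑ i, β i = k + 1 ∧ β j ≠ 0, f β := by
  refine sum_nbij' (fun β i => β i + if i = j then 1 else 0)
    (fun β i => β i - if i = j then 1 else 0) ?_ ?_ (fun β _ => by simp) ?_ (fun _ _ => rfl)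
  · intro β hβ
    simp only [mem_filter, mem_halfBox] at hβ ⊢
    obtain ⟨hbox, hsum⟩ := hβ
    refine ⟨fun i => ?_, by simp [sum_add_distrib, hsum], by simp⟩
    have := hbox i
    obtain rfl | h := eq_or_ne i j
    · simp only [↓reduceIte] at this ⊢; omega
    · simp only [if_neg h] at this ⊢; omega
  · intro β hβ
    simp only [mem_filter, mem_halfBox] at hβ ⊢
    obtain ⟨hbox, hsum, hβj⟩ := hβ
    refine ⟨fun i => ?_, ?_⟩
    · have := hbox i
      obtain rfl | h := eq_or_ne i j
      · simp only [↓reduceIte] at this ⊢; omega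
      · simp only [if_neg h] at this ⊢; omega
    · rw [sum_tsub_distrib _ fun i _ => by
        split_ifs with h <;> [exact h ▸ Nat.one_le_iff_ne_zero.mpr hβj; omega]]
      simp [hsum]
  · intro β hβ
    funext i
    obtain rfl | h := eq_or_ne i j
    · simp only [↓reduceIte]
      have := (mem_filter.mp hβ).2.2
      omega
    · simp [h]

lemma mul_sum_halfBox_sub_two (k : ℕ) (s : (Fin n → ℕ) → ℝ) (α : Fin n → ℕ) (j : Fin n) :
    (α j : ℝ) * ((α j : ℝ) - 1) *
      ∑ β ∈ halfBox (fun i => α i - if i = j then 2 else 0) with ∑ i, β i = k,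
        (∏ i, heatCoeff (α i - if i = j then 2 else 0) (β i)) *
          s (fun i => (α i - if i = j then 2 else 0) - 2 * β i)
    = ∑ β ∈ halfBox α with ∑ i, β i = k + 1,
        (β j : ℝ) * ((∏ i, heatCoeff (α i) (β i)) * s (fun i => α i - 2 * β i)) := by
  rcases lt_or_ge (α j) 2 with hα | hα
  · have hcoeff : (α j : ℝ) * ((α j : ℝ) - 1) = 0 := by
      interval_cases (α j) <;> norm_num
    have hβj : ∀ β ∈ halfBox α, β j = 0 := fun β hβ => by
      have := mem_halfBox.mp hβ j
      omega
    rw [hcoeff, zero_mul, eq_comm]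
    exact sum_eq_zero fun β hβ => by simp [hβj β (mem_filter.mp hβ).1]
  have hterm : ∀ β ∈ halfBox (fun i => α i - if i = j then 2 else 0),
      (α j : ℝ) * ((α j : ℝ) - 1) * ((∏ i, heatCoeff (α i - if i = j then 2 else 0) (β i)) *
          s (fun i => (α i - if i = j then 2 else 0) - 2 * β i))
        = ((β j + if j = j then 1 else 0 : ℕ) : ℝ) *
          ((∏ i, heatCoeff (α i) (β i + if i = j then 1 else 0)) *
            s (fun i => α i - 2 * (β i + if i = j then 1 else 0))) := fun β hβ => by
    have hβj : β j ≤ (α j - 2) / 2 := by simpa using mem_halfBox.mp hβ j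
    have hidx : (fun i => (α i - if i = j then 2 else 0) - 2 * β i)
        = fun i => α i - 2 * (β i + if i = j then 1 else 0) := by
      funext i
      obtain rfl | h := eq_or_ne i j
      · simp only [↓reduceIte]; omega
      · simp [h]
    rw [hidx, ← mul_assoc, mul_prod_heatCoeff_sub_two hα hβj]
    simp [mul_assoc]
  rw [mul_sum, sum_congr rfl fun β hβ => hterm β (mem_filter.mp hβ).1]
  refine (sum_halfBox_sub_two k hα fun β =>
    (β j : ℝ) * ((∏ i, heatCoeff (α i) (β i)) * s (fun i => α i - 2 * β i))).trans ?_
  rw [← filter_filter]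
  exact sum_filter_of_ne fun β _ h hβ => h (by simp [hβ])

lemma laplacian_iterate_apply (k : ℕ) (s : (Fin n → ℕ) → ℝ) (α : Fin n → ℕ) :
    (laplacian^[k] s) α = k ! * ∑ β ∈ halfBox α with ∑ i, β i = k,
      (∏ i, heatCoeff (α i) (β i)) * s (fun i => α i - 2 * β i) := by
  induction k generalizing α with
  | zero =>
    have h : {β ∈ halfBox α | ∑ i, β i = 0} = {0} := by
      ext β
      simp +contextual [mem_halfBox, sum_eq_zero_iff, funext_iff]
    have hcoeff (a : ℕ) : heatCoeff a 0 = 1 := by simp [heatCoeff, Nat.factorial_ne_zero]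
    rw [h, sum_singleton]
    simp [hcoeff]
  | succ k ih =>
    calc (laplacian^[k + 1] s) α
        = ∑ j, (α j : ℝ) * ((α j : ℝ) - 1) *
            (laplacian^[k] s) (fun i => α i - if i = j then 2 else 0) := by
          rw [Function.iterate_succ_apply']
          rfl
      _ = k ! * ∑ β ∈ halfBox α with ∑ i, β i = k + 1,
            (∑ j, (β j : ℝ)) * ((∏ i, heatCoeff (α i) (β i)) * s (fun i => α i - 2 * β i)) := by
          simp_rw [ih, mul_left_comm _ (k ! : ℝ), mul_sum_halfBox_sub_two, ← mul_sum,
            sum_mul]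
          rw [sum_comm]
      _ = (k + 1)! * ∑ β ∈ halfBox α with ∑ i, β i = k + 1,
            (∏ i, heatCoeff (α i) (β i)) * s (fun i => α i - 2 * β i) := by
          rw [mul_sum, mul_sum]
          refine sum_congr rfl fun β hβ => ?_
          rw [← Nat.cast_sum, (mem_filter.mp hβ).2, Nat.factorial_succ]
          push_cast
          ring

lemma laplacian_iterate_apply_eq_zero {k : ℕ} (s : (Fin n → ℕ) → ℝ) {α : Fin n → ℕ}
    (hk : ∑ i, α i / 2 < k) : (laplacian^[k] s) α = 0 := by
  rw [laplacian_iterate_apply,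
    filter_false_of_mem fun β hβ => ((sum_le_of_mem_halfBox hβ).trans_lt hk).ne, sum_empty,
    mul_zero]

lemma fp_eq_sum_range (s : (Fin n → ℕ) → ℝ) (t : ℝ) (α : Fin n → ℕ) {M : ℕ}
    (hM : ∑ i, α i / 2 < M) :
    fp s t α = ∑ k ∈ range M, t ^ k / k ! * (laplacian^[k] s) α := by
  rw [fp_eq_sum_halfBox, ← sum_fiberwise_of_maps_to (g := fun β => ∑ i, β i) (t := range M)
    fun β hβ => mem_range.mpr ((sum_le_of_mem_halfBox hβ).trans_lt hM)]
  refine sum_congr rfl fun k _ => ?_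
  rw [laplacian_iterate_apply, ← mul_assoc, div_mul_cancel₀ _ (by positivity), mul_sum]
  exact sum_congr rfl fun β hβ => by rw [(mem_filter.mp hβ).2]; ring

lemma laplacian_fp (s : (Fin n → ℕ) → ℝ) (t : ℝ) : laplacian (fp s t) = fp (laplacian s) t := by
  funext α
  have hM : ∀ j, ∑ i, (α i - if i = j then 2 else 0) / 2 < ∑ i, α i / 2 + 1 := fun j =>
    Nat.lt_succ_of_le (sum_le_sum fun i _ => Nat.div_le_div_right (Nat.sub_le _ _))
  simp only [laplacian, fp_eq_sum_range _ _ _ (hM _), fp_eq_sum_range _ _ α (lt_add_one _), mul_sum]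
  rw [sum_comm]
  refine sum_congr rfl fun k _ => ?_
  rw [← Function.iterate_succ_apply, Function.iterate_succ_apply' laplacian, laplacian, mul_sum]
  exact sum_congr rfl fun j _ => by ring

lemma laplacian_iterate_fp (k : ℕ) (s : (Fin n → ℕ) → ℝ) (t : ℝ) :
    laplacian^[k] (fp s t) = fp (laplacian^[k] s) t :=
  (Function.Semiconj.iterate_right (f := fun s => fp s t)
    (fun s => (laplacian_fp s t).symm) k s).symm

end HeatMoment

open HeatMoment

theorem hasDerivAt_fp {n : ℕ} (s : (Fin n → ℕ) → ℝ) (α : Fin n → ℕ) (t : ℝ) :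
    HasDerivAt (fun τ => fp s τ α) (laplacian (fp s t) α) t := by
  have hM : ∑ i, α i / 2 < ∑ i, α i / 2 + 1 := lt_add_one _
  have hpoly : (fun τ => fp s τ α)
      = fun τ => ∑ k ∈ range (∑ i, α i / 2 + 1 + 1), τ ^ k / k ! * (laplacian^[k] s) α :=
    funext fun τ => fp_eq_sum_range s τ α (hM.trans (lt_add_one _))
  rw [hpoly, laplacian_fp, fp_eq_sum_range _ _ _ hM]
  simp_rw [← Function.iterate_succ_apply]
  exact hasDerivAt_sum_range_pow_div_factorial _ _ t

theorem fp_zero {n : ℕ} (s : (Fin n → ℕ) → ℝ) (α : Fin n → ℕ) : fp s 0 α = s α := by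
  rw [fp_eq_sum_range s 0 α (lt_add_one _), sum_range_succ']
  simp

theorem fp_fp {n : ℕ} (s : (Fin n → ℕ) → ℝ) (t₁ t₂ : ℝ) (α : Fin n → ℕ) :
    fp (fp s t₁) t₂ α = fp s (t₁ + t₂) α := by
  set M := ∑ i, α i / 2 + 1
  have hM : ∑ i, α i / 2 < M := lt_add_one _
  calc fp (fp s t₁) t₂ α
      = ∑ k ∈ range M, ∑ m ∈ range M,
          t₂ ^ k / k ! * (t₁ ^ m / m ! * (laplacian^[m + k] s) α) := by
        simp_rw [fp_eq_sum_range _ _ _ hM, laplacian_iterate_fp, fp_eq_sum_range _ _ _ hM, mul_sum,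
          Function.iterate_add_apply]
    _ = ∑ p ∈ range M ×ˢ range M, t₁ ^ p.1 / p.1 ! * (t₂ ^ p.2 / p.2 !) *
          (laplacian^[p.1 + p.2] s) α := by
        rw [sum_product_right]
        exact sum_congr rfl fun k _ => sum_congr rfl fun m _ => by ring
    _ = ∑ N ∈ range M, ∑ p ∈ antidiagonal N, t₁ ^ p.1 / p.1 ! * (t₂ ^ p.2 / p.2 !) *
          (laplacian^[p.1 + p.2] s) α :=
        sum_range_product_eq_sum_antidiagonal _ fun p hp => by
          rw [laplacian_iterate_apply_eq_zero s (hM.trans_le hp), mul_zero]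
    _ = ∑ N ∈ range M, (t₁ + t₂) ^ N / N ! * (laplacian^[N] s) α := by
        refine sum_congr rfl fun N _ => ?_
        rw [add_pow_div_factorial, sum_mul]
        exact sum_congr rfl fun p hp => by rw [mem_antidiagonal.mp hp]
    _ = fp s (t₁ + t₂) α := (fp_eq_sum_range _ _ _ hM).symm

theorem fp_linear_combination {n : ℕ} (a b : ℝ) (s s' : (Fin n → ℕ) → ℝ) (t : ℝ)
    (α : Fin n → ℕ) :
    fp (fun β => a * s β + b * s' β) t α = a * fp s t α + b * fp s' t α := by
  simp only [fp, mul_sum, ← sum_add_distrib]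
  exact sum_congr rfl fun β _ => by ring

/-- `𝔭` solves the heat moment recursion with initial value `s` and satisfies:
(i) `𝔭_s(0) = s`; (ii) `𝔭_{𝔭_s(t₁)}(t₂) = 𝔭_s(t₁+t₂)`; (iii) linearity in `s`. -/
theorem fp_properties (n : ℕ) :
    (∀ (s : (Fin n → ℕ) → ℝ) (α : Fin n → ℕ) (t : ℝ),
      HasDerivAt (fun τ : ℝ => fp s τ α)
        (∑ j : Fin n, (α j : ℝ) * ((α j : ℝ) - 1) *
          fp s t (fun i => α i - if i = j then 2 else 0)) t) ∧
    (∀ (s : (Fin n → ℕ) → ℝ) (α : Fin n → ℕ), fp s 0 α = s α) ∧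
    (∀ (s : (Fin n → ℕ) → ℝ) (t₁ t₂ : ℝ) (α : Fin n → ℕ),
      fp (fp s t₁) t₂ α = fp s (t₁ + t₂) α) ∧
    (∀ (a b : ℝ) (s s' : (Fin n → ℕ) → ℝ) (t : ℝ) (α : Fin n → ℕ),
      fp (fun β => a * s β + b * s' β) t α = a * fp s t α + b * fp s' t α) :=
  ⟨hasDerivAt_fp, fp_zero, fp_fp, fp_linear_combination⟩
end

section
/- Let s be a moment sequence represented by the atomic measure μ₀ = Σ_{i=1}^k c_i δ_{x_i} with c_i > 0 and x_i ∈ ℝⁿ. Then for every t ∈ ℝ, the transport-evolved sequence 𝔱_s(t) is represented by μ_t = Σ_{i=1}^k c_i(t) δ_{x_i(t)} with c_i(t) = c_i·exp(−Σ_j a_j t) and x_{i,j}(t) = x_{i,j}·e^{−a_j t}. -/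
open MeasureTheory

lemma integrable_dirac' {α : Type*} [MeasurableSpace α] [MeasurableSingletonClass α]
    {f : α → ℝ} (hf : Measurable f) (a : α) : Integrable f (Measure.dirac a) := by
  refine ⟨hf.aestronglyMeasurable, ?_⟩
  simp [HasFiniteIntegral, lintegral_dirac]

lemma integral_sum_smul_dirac {α : Type*} [MeasurableSpace α] [MeasurableSingletonClass α]
    {k : ℕ} (c : Fin k → ℝ) (hc : ∀ i, 0 ≤ c i) (x : Fin k → α)
    {f : α → ℝ} (hf : Measurable f) :
    ∫ y, f y ∂(∑ i : Fin k, (ENNReal.ofReal (c i)) • Measure.dirac (x i))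
      = ∑ i : Fin k, c i * f (x i) := by
  rw [integral_finset_sum_measure]
  · refine Finset.sum_congr rfl fun i _ => ?_
    rw [integral_smul_measure, integral_dirac]
    simp [ENNReal.toReal_ofReal (hc i), smul_eq_mul]
  · intro i _
    exact (integrable_dirac' hf (x i)).smul_measure ENNReal.ofReal_ne_top

/-- The transport flow of sequences: `𝔱_{s,α}(t) = s_α · exp(−Σᵢ aᵢ(αᵢ+1)t)`. -/
noncomputable def ft {n : ℕ} (a : Fin n → ℝ) (s : (Fin n → ℕ) → ℝ) (t : ℝ)
    (α : Fin n → ℕ) : ℝ :=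
  s α * Real.exp (-∑ i : Fin n, a i * ((α i : ℝ) + 1) * t)

/-- If `s` is represented by the atomic measure `μ₀ = Σᵢ cᵢ δ_{xᵢ}` then `𝔱_s(t)`
is represented by `μ_t = Σᵢ cᵢ(t) δ_{xᵢ(t)}` with `cᵢ(t) = cᵢ e^{−(Σⱼ aⱼ)t}` and
`x_{i,j}(t) = x_{i,j} e^{−aⱼt}`. -/
theorem ft_atomic (n k : ℕ) (a : Fin n → ℝ) (c : Fin k → ℝ) (hc : ∀ i, 0 < c i)
    (x : Fin k → Fin n → ℝ) (s : (Fin n → ℕ) → ℝ)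
    (hrep : ∀ α : Fin n → ℕ,
      s α = ∫ y : Fin n → ℝ, (∏ j, y j ^ α j)
        ∂(∑ i : Fin k, (ENNReal.ofReal (c i)) • Measure.dirac (x i)))
    (t : ℝ) :
    ∀ α : Fin n → ℕ,
      ft a s t α = ∫ y : Fin n → ℝ, (∏ j, y j ^ α j)
        ∂(∑ i : Fin k,
            (ENNReal.ofReal (c i * Real.exp (-∑ j : Fin n, a j * t))) •
              Measure.dirac (fun j => x i j * Real.exp (-(a j) * t))) := by
  intro α
  have hmeas : Measurable fun y : Fin n → ℝ => ∏ j, y j ^ α j :=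
    Finset.measurable_prod _ fun j _ => (measurable_pi_apply j).pow_const _
  rw [integral_sum_smul_dirac _ (fun i => le_of_lt (mul_pos (hc i) (Real.exp_pos _))) _ hmeas,
    ft, hrep α, integral_sum_smul_dirac _ (fun i => (hc i).le) _ hmeas, Finset.sum_mul]
  refine Finset.sum_congr rfl fun i _ => ?_
  have : ∀ j, (x i j * Real.exp (-(a j) * t)) ^ α j
      = x i j ^ α j * Real.exp (-(a j * (α j : ℝ) * t)) := by
    intro j
    rw [mul_pow, ← Real.exp_nat_mul]
    ring_nf
  simp only [this, Finset.prod_mul_distrib, ← Real.exp_sum]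
  have hexp : Real.exp (-∑ j : Fin n, a j * t) * Real.exp (∑ j : Fin n, -(a j * (α j : ℝ) * t))
      = Real.exp (-∑ i : Fin n, a i * ((α i : ℝ) + 1) * t) := by
    rw [← Real.exp_add]
    congr 1
    rw [← Finset.sum_neg_distrib, ← Finset.sum_add_distrib, ← Finset.sum_neg_distrib]
    exact Finset.sum_congr rfl fun j _ => by ring
  rw [← hexp]
  ring
end
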